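/- Let D be a fixed deduction system and S a constraint system. For every ground substitution σ with dom(σ) = vars(S) there exists a derivation that is (S,σ)-compliant and (Sub(S),σ)-maximal and in which no term is deduced twice by a standard rule. -/

import Mathlib

/-! ### Terms -/

/-- First-order terms: variables, ordinary constants, nonces (an infinite
subset of the constants), and function applications. -/
inductive Term : Type
  | var : ℕ → Term
  | cst : ℕ → Term
  | nonce : ℕ → Term
  | func : ℕ → List Term → Term

namespace Term

/-- The subterm relation. -/
inductive IsSubterm : Term → Term → Prop
  | refl (t : Term) : IsSubterm t t
  | func {s t : Term} {f : ℕ} {args : List Term} :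
      t ∈ args → IsSubterm s t → IsSubterm s (func f args)

/-- The set of subterms of a term. -/
def sub (t : Term) : Set Term := {s | IsSubterm s t}

/-- The set of (indices of) variables of a term. -/
def varsSet (t : Term) : Set ℕ := {x | IsSubterm (var x) t}

/-- A term is ground if it has no variables. -/
def Ground (t : Term) : Prop := varsSet t = ∅

/-- The term is a variable. -/
def IsVar : Term → Prop
  | var _ => True
  | _ => False

/-- Application of a substitution to a term. -/
noncomputable def subst (σ : ℕ → Term) : Term → Term
  | var x => σ x
  | cst c => cst c
  | nonce n => nonce n
  | func f args => func f (args.attach.map (fun a => Term.subst σ a.1))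
decreasing_by
  have := List.sizeOf_lt_of_mem a.2
  simp only [Term.func.sizeOf_spec]
  omega

/-- The function symbol `f` occurs in the term `t`. -/
def OccursFun (f : ℕ) (t : Term) : Prop := ∃ args, IsSubterm (func f args) t

end Term

/-! ### Substitutions -/

/-- Substitutions (maps from variables to terms). -/
abbrev Subst := ℕ → Term

namespace Subst

/-- The domain of a substitution. -/
def dom (σ : Subst) : Set ℕ := {x | σ x ≠ .var x}

/-- The image of a substitution. -/
def img (σ : Subst) : Set Term := {t | ∃ x ∈ dom σ, σ x = t}

/-- Idempotency of a substitution. -/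
def Idem (σ : Subst) : Prop := ∀ x, (σ x).subst σ = σ x

/-- A substitution is ground if its image consists of ground terms. -/
def IsGround (σ : Subst) : Prop := ∀ x ∈ dom σ, (σ x).Ground

open Classical in
/-- Union of two substitutions (intended for disjoint domains). -/
noncomputable def union (σ τ : Subst) : Subst := fun x =>
  if σ x = Term.var x then τ x else σ x

end Subst

/-- Subterms of a set of terms. -/
def subT (T : Set Term) : Set Term := {s | ∃ t ∈ T, Term.IsSubterm s t}

/-- Variables of a set of terms. -/
def varsT (T : Set Term) : Set ℕ := {x | ∃ t ∈ T, Term.IsSubterm (.var x) t}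

/-- DAG size of a set of terms: number of its subterms. -/
noncomputable def sizeT (T : Set Term) : ℕ := (subT T).ncard

/-- Size of a substitution: DAG size of its image. -/
noncomputable def sizeSubst (σ : Subst) : ℕ := sizeT σ.img

/-! ### Deduction systems, steps and derivations -/

/-- A deduction system: a finite set of (standard) deduction rules, each rule
being a pair (left-hand sides, right-hand side) whose right-hand-side variables
occur in the left-hand sides.  Nonce-creation rules and reception rules are
built into the notions of steps/derivations below. -/
structure DeductionSystem where
  rules : Set (List Term × Term)
  finite : rules.Finite
  wf : ∀ p ∈ rules, p.2.varsSet ⊆ varsT {u | u ∈ p.1}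

/-- A step of a derivation: a reception `? → t` or a standard deduction `l → r`
(nonce creations are standard deductions with empty left-hand side). -/
inductive Step
  | recv : Term → Step
  | std : List Term → Term → Step

namespace Step

/-- Right-hand side of a step. -/
def rhs : Step → Term
  | recv t => t
  | std _ r => r

/-- All terms occurring in the step. -/
def terms : Step → Set Term
  | recv t => {t}
  | std l r => {r} ∪ {u | u ∈ l}

end Step

/-- The set of right-hand sides of the first `k` steps of `D`. -/
def RHSset (D : List Step) (k : ℕ) : Set Term :=
  {r | ∃ j < k, ∃ s, D[j]? = some s ∧ s.rhs = r}

/-- A step is a deduction of the system `DS`: a reception of a ground term, a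
nonce creation, or a ground instance of a (standard) rule of `DS`. -/
def IsDeduction (DS : DeductionSystem) (s : Step) : Prop :=
  match s with
  | .recv t => t.Ground
  | .std l r =>
      (∀ u ∈ l, u.Ground) ∧ r.Ground ∧
        ((l = [] ∧ ∃ n, r = Term.nonce n) ∨
          ∃ p ∈ DS.rules, ∃ σ : Subst,
            l = p.1.map (Term.subst σ) ∧ r = p.2.subst σ)

/-- A derivation: a sequence of deductions in which the left-hand side of every
standard step has already been deduced. -/
def IsDerivation (DS : DeductionSystem) (D : List Step) : Prop :=
  (∀ s ∈ D, IsDeduction DS s) ∧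
  ∀ (i : ℕ) (l : List Term) (r : Term), D[i]? = some (Step.std l r) → ∀ u ∈ l, u ∈ RHSset D i

/-- The position of the first reception of `D` at index `≥ k` (or `|D|` if
there is none): (0-indexed version of) `Next(D, ·)`. -/
noncomputable def nextRecv (D : List Step) (k : ℕ) : ℕ :=
  sInf ({D.length} ∪ {j | k ≤ j ∧ ∃ t, D[j]? = some (Step.recv t)})

/-- `Der DS K`: the set of ground terms derivable from the knowledge `K`. -/
def Der (DS : DeductionSystem) (K : Set Term) : Set Term :=
  {t | ∃ D : List Step, IsDerivation DS D ∧
        (∀ (j : ℕ) (u : Term), D[j]? = some (Step.recv u) → u ∈ K) ∧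
        ∃ l, D.getLast? = some (Step.std l t)}

/-- No term is deduced twice in `D` by a standard rule. -/
def NoDuplicateStd (D : List Step) : Prop :=
  ∀ (i j : ℕ) (li lj : List Term) (r : Term), D[i]? = some (Step.std li r) → D[j]? = some (Step.std lj r) → i = j

/-- `(T,σ)`-maximality of a derivation. -/
def MaximalDeriv (DS : DeductionSystem) (T : Set Term) (σ : Subst) (D : List Step) : Prop :=
  ∀ t ∈ subT T, ∀ k ≤ D.length,
    t.subst σ ∈ Der DS (RHSset D k) → t.subst σ ∈ RHSset D (nextRecv D k)

/-! ### Constraint systems -/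

/-- A constraint: a reception `?t`, an emission `!t` or a negative
constraint `♮t`. -/
inductive Constraint
  | recv : Term → Constraint
  | send : Term → Constraint
  | neg : Term → Constraint

namespace Constraint

/-- The term of a constraint. -/
def term : Constraint → Term
  | recv t => t
  | send t => t
  | neg t => t

/-- The constraint is a send constraint. -/
def isSend : Constraint → Bool
  | send _ => true
  | _ => false

/-- Apply a substitution to a constraint. -/
noncomputable def map (θ : Subst) : Constraint → Constraint
  | recv t => recv (t.subst θ)
  | send t => send (t.subst θ)
  | neg t => neg (t.subst θ)

end Constraint

/-- A (pre-)constraint system is a finite sequence of constraints. -/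
abbrev CSystem := List Constraint

/-- The terms of a constraint system. -/
def csTerms (S : CSystem) : Set Term := {t | ∃ c ∈ S, c.term = t}

/-- `Sub(S)`. -/
def csSub (S : CSystem) : Set Term := subT (csTerms S)

/-- `vars(S)`. -/
def csVars (S : CSystem) : Set ℕ := varsT (csTerms S)

/-- `|Sub(S)|`. -/
noncomputable def csSize (S : CSystem) : ℕ := sizeT (csTerms S)

/-- Apply a substitution to all constraints of a system. -/
noncomputable def csSubst (S : CSystem) (θ : Subst) : CSystem := S.map (Constraint.map θ)

/-- Origination and determination: `S` is a genuine constraint system. -/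
def IsCS (S : CSystem) : Prop :=
  (∀ (i : ℕ) (t : Term), S[i]? = some (Constraint.send t) →
      t.varsSet ⊆ {x | ∃ j < i, ∃ u : Term, S[j]? = some (Constraint.recv u) ∧ x ∈ u.varsSet}) ∧
  (∀ (i : ℕ) (t : Term), S[i]? = some (Constraint.neg t) →
      t.varsSet ⊆ {x | ∃ (j : ℕ) (u : Term), S[j]? = some (Constraint.recv u) ∧ x ∈ u.varsSet})

/-- The knowledge produced by the send constraints up to (and including) index
`i`, instantiated by `σ` (this is `{tⱼσ : j ≤ prev(i), S[j] = !tⱼ}`). -/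
def knowledge (S : CSystem) (σ : Subst) (i : ℕ) : Set Term :=
  {u | ∃ j ≤ i, ∃ t, S[j]? = some (Constraint.send t) ∧ u = t.subst σ}

/-- A solution of a constraint system. -/
structure IsSolution (DS : DeductionSystem) (S : CSystem) (σ : Subst) : Prop where
  ground : σ.IsGround
  idem : σ.Idem
  dom_eq : σ.dom = csVars S
  recv_mem : ∀ (i : ℕ) (t : Term), S[i]? = some (Constraint.recv t) → t.subst σ ∈ Der DS (knowledge S σ i)
  neg_not_mem : ∀ (i : ℕ) (t : Term), S[i]? = some (Constraint.neg t) → t.subst σ ∉ Der DS (knowledge S σ i)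

/-- `prev(i)`: the last send index `≤ i` of `S`, if any. -/
def prevSend (S : CSystem) (i : ℕ) : Option ℕ :=
  ((List.range (i + 1)).filter (fun j => ((S[j]?).map Constraint.isSend).getD false)).max?

/-- `(S,σ)`-compliance of a derivation `D` with the mapping `α`: `α` is a
strictly increasing bijection from the send indices of `S` onto the reception
positions of `D`, sending `!t` to the reception `? → tσ`. -/
structure Compliant (S : CSystem) (σ : Subst) (D : List Step) (α : ℕ → ℕ) : Prop where
  mono : ∀ (i j : ℕ) (ti tj : Term), S[i]? = some (Constraint.send ti) →
    S[j]? = some (Constraint.send tj) → i < j → α i < α j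
  maps : ∀ (i : ℕ) (t : Term), S[i]? = some (Constraint.send t) →
    D[α i]? = some (Step.recv (t.subst σ))
  surj : ∀ (j : ℕ) (u : Term), D[j]? = some (Step.recv u) →
    ∃ i t, S[i]? = some (Constraint.send t) ∧ α i = j

/-- Position in `D` of the first reception strictly after the reception
corresponding (via `α`) to the last send constraint `≤ i` of `S` (or the first
reception of `D` if there is no such send): this is `Next(D, α(prev(i)))`. -/
noncomputable def cutoff (S : CSystem) (D : List Step) (α : ℕ → ℕ) (i : ℕ) : ℕ :=
  match prevSend S i with
  | none => nextRecv D 0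
  | some p => nextRecv D (α p + 1)

/-- `D, σ, α ⊢ S`: the derivation `D` is a proof of `σ ⊨ S`. -/
structure IsProof (DS : DeductionSystem) (S : CSystem) (σ : Subst)
    (D : List Step) (α : ℕ → ℕ) : Prop where
  deriv : IsDerivation DS D
  compliant : Compliant S σ D α
  recv_proved : ∀ (i : ℕ) (t : Term), S[i]? = some (Constraint.recv t) →
    ∃ j < cutoff S D α i, ∃ s, D[j]? = some s ∧ s.rhs = t.subst σ
  neg_not_mem : ∀ (i : ℕ) (t : Term), S[i]? = some (Constraint.neg t) →
    t.subst σ ∉ Der DS (knowledge S σ i)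

/-! ### Subterm deduction systems -/

/-- A composition rule: `x₁,…,xₙ → f(x₁,…,xₙ)` with pairwise distinct
variables `xᵢ`. -/
def IsCompRule (p : List Term × Term) : Prop :=
  ∃ (f : ℕ) (xs : List ℕ), xs.Nodup ∧ p.1 = xs.map Term.var ∧
    p.2 = Term.func f (xs.map Term.var)

/-- A decomposition rule: the right-hand side is a subterm of a left-hand
side. -/
def IsDecompRule (p : List Term × Term) : Prop :=
  ∃ l ∈ p.1, p.2 ∈ l.sub

/-- A subterm deduction system: every standard rule is a composition or a
decomposition rule. -/
def SubtermSystem (DS : DeductionSystem) : Prop :=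
  ∀ p ∈ DS.rules, IsCompRule p ∨ IsDecompRule p

/-- A step is a composition: a reception, a nonce creation, or an instance of
a composition rule of `DS`. -/
def IsCompositionStep (DS : DeductionSystem) (s : Step) : Prop :=
  match s with
  | .recv _ => True
  | .std l r =>
      (l = [] ∧ ∃ n, r = Term.nonce n) ∨
        ∃ p ∈ DS.rules, IsCompRule p ∧
          ∃ σ : Subst, l = p.1.map (Term.subst σ) ∧ r = p.2.subst σ

/-- `l → r` is an instance (not necessarily ground) of a standard deduction
rule of the system. -/
def StdRuleInstance (DS : DeductionSystem) (l : List Term) (r : Term) : Prop :=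
  (l = [] ∧ ∃ n, r = Term.nonce n) ∨
    ∃ p ∈ DS.rules, ∃ σ : Subst, l = p.1.map (Term.subst σ) ∧ r = p.2.subst σ

/-- DAG size of a rule. -/
noncomputable def ruleSize (p : List Term × Term) : ℕ :=
  sizeT ({p.2} ∪ {u | u ∈ p.1})

/-- Maximal size of a decomposition rule of the system. -/
noncomputable def maxDecompSize (DS : DeductionSystem) : ℕ :=
  sSup {n | ∃ p ∈ DS.rules, IsDecompRule p ∧ ruleSize p = n}

/-! ### Localization -/

/-- `T` localizes the derivation `D` for `σ`. -/
def Localizes (DS : DeductionSystem) (T : Set Term) (σ : Subst) (D : List Step) : Prop :=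
  ∀ (i : ℕ) (l : List Term) (r : Term), D[i]? = some (Step.std l r) →
    ∀ t ∈ subT T, ¬ t.IsVar → t.subst σ = r →
      ∃ ts : List Term, (∀ u ∈ ts, u ∈ subT T) ∧
        (∀ u ∈ ts, u.subst σ ∈ RHSset D i) ∧ StdRuleInstance DS ts t

/-- `T` one-to-one localizes `D` for `σ`. -/
def OneToOneLocalizes (DS : DeductionSystem) (T : Set Term) (σ : Subst)
    (D : List Step) : Prop :=
  Localizes DS T σ D ∧ Set.InjOn (Term.subst σ) (subT T)

/-! ### Terms of a derivation, `Out(S)` -/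

/-- The terms occurring in a derivation. -/
def derTerms (D : List Step) : Set Term := {t | ∃ s ∈ D, t ∈ s.terms}

/-- `Sub(D)`. -/
def subD (D : List Step) : Set Term := subT (derTerms D)

/-- The terms of the send constraints of `S`. -/
def outTerms (S : CSystem) : Set Term := {t | Constraint.send t ∈ S}

/-! ### Milestone sequences -/

/-- An element of a milestone sequence: `→ t` or `? → t`. -/
inductive MStep
  | ded : Term → MStep
  | recvm : Term → MStep

/-- The term of a milestone element. -/
def MStep.term : MStep → Term
  | ded t => t
  | recvm t => t

/-- `M` is a milestone candidate sequence of `D` for `(T,σ)`. -/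
def IsMilestoneOf (T : Set Term) (σ : Subst) (D : List Step) (M : List MStep) : Prop :=
  (∀ m ∈ M, m.term ∈ subT T) ∧
  ∃ α : ℕ → ℕ, (∀ i j, i < j → j < M.length → α i < α j) ∧
    ∀ (i : ℕ) (m : MStep), M[i]? = some m →
      match m with
      | MStep.recvm t => D[α i]? = some (Step.recv (t.subst σ))
      | MStep.ded t => ∃ l, D[α i]? = some (Step.std l (t.subst σ))

/-- `M` is the `(T,σ)`-milestone sequence of `D`: a candidate of maximal
length. -/
def IsMilestoneSeq (T : Set Term) (σ : Subst) (D : List Step) (M : List MStep) : Prop :=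
  IsMilestoneOf T σ D M ∧ ∀ M', IsMilestoneOf T σ D M' → M'.length ≤ M.length

/-! ### Free pairing symbol -/

/-- `f` occurs in the rule `p`. -/
def OccursInRule (f : ℕ) (p : List Term × Term) : Prop :=
  (∃ t ∈ p.1, t.OccursFun f) ∨ p.2.OccursFun f

/-- The system contains a composition rule `x₁, x₂ → f(x₁,x₂)` where the
binary symbol `f` occurs in no other rule. -/
def FreePairing (DS : DeductionSystem) : Prop :=
  ∃ (f x₁ x₂ : ℕ), x₁ ≠ x₂ ∧
    ([Term.var x₁, Term.var x₂], Term.func f [Term.var x₁, Term.var x₂]) ∈ DS.rules ∧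
    ∀ p ∈ DS.rules, OccursInRule f p →
      p = ([Term.var x₁, Term.var x₂], Term.func f [Term.var x₁, Term.var x₂])

/-! ### Unification -/

/-- `σ` is a unifier of the unification system `U`. -/
def IsUnifier (U : Set (Term × Term)) (σ : Subst) : Prop :=
  ∀ pq ∈ U, Term.subst σ pq.1 = Term.subst σ pq.2

/-- `θ` is a most general unifier of `U`. -/
def IsMGU (U : Set (Term × Term)) (θ : Subst) : Prop :=
  IsUnifier U θ ∧ ∀ σ, IsUnifier U σ → ∃ τ : Subst, ∀ x, σ x = (θ x).subst τ

/-- The terms of a unification system. -/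
def unifTerms (U : Set (Term × Term)) : Set Term :=
  {t | ∃ pq ∈ U, t = pq.1 ∨ t = pq.2}

/-- The variables of a unification system. -/
def unifVars (U : Set (Term × Term)) : Set ℕ := varsT (unifTerms U)

/-!
The derivation is built by reading `S` from left to right. Every send constraint `!t` becomes a
reception `? → tσ`, and at the start and after every reception we append standard deductions
until every term of the finite set `σ(Sub S)` that is derivable from the current knowledge has
been deduced. One round of this saturation replays a derivation of a missing term, dropping its
receptions (already known) and every step whose result is already known; this keeps the
right-hand sides of standard steps pairwise distinct and deduces at least one new element of
`σ(Sub S)`, so saturation terminates. Maximality then holds because the next reception after any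
position is a point where the knowledge gathered so far is saturated.
-/

lemma List.getElem?_append_singleton_eq_some {α : Type*} {l : List α} {a x : α} {i : ℕ} :
    (l ++ [a])[i]? = some x ↔ l[i]? = some x ∨ (i = l.length ∧ x = a) := by
  rw [List.getElem?_append]
  grind

namespace Term

lemma subst_func (σ : Subst) (f : ℕ) (args : List Term) :
    (func f args).subst σ = func f (args.map (subst σ)) := by
  rw [subst]
  simp

lemma isSubterm_func_iff {s : Term} {f : ℕ} {args : List Term} :
    IsSubterm s (func f args) ↔ s = func f args ∨ ∃ a ∈ args, IsSubterm s a := by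
  constructor
  · rintro (_ | ⟨ha, hs⟩)
    · exact Or.inl rfl
    · exact Or.inr ⟨_, ha, hs⟩
  · rintro (rfl | ⟨a, ha, hs⟩)
    · exact IsSubterm.refl _
    · exact IsSubterm.func ha hs

lemma sub_finite (t : Term) : t.sub.Finite := by
  induction t using Term.rec (motive_2 := fun l => ∀ t ∈ l, t.sub.Finite) with
  | var x => exact (Set.finite_singleton (var x)).subset fun s hs => by cases hs; rfl
  | cst c => exact (Set.finite_singleton (cst c)).subset fun s hs => by cases hs; rfl
  | nonce n => exact (Set.finite_singleton (nonce n)).subset fun s hs => by cases hs; rfl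
  | func f args ih =>
      refine ((Set.finite_singleton (func f args)).union
        (args.finite_toSet.biUnion ih)).subset fun s hs => ?_
      rcases isSubterm_func_iff.1 hs with rfl | ⟨a, ha, hs⟩
      · exact Or.inl rfl
      · exact Or.inr (Set.mem_biUnion ha hs)
  | nil => simp_all
  | cons a l iha ihl =>
      rename_i t ht
      rcases List.mem_cons.1 ht with rfl | ht
      · exact iha
      · exact ihl t ht

lemma exists_var_of_isSubterm_subst {σ : Subst} {y : ℕ} (t : Term)
    (h : IsSubterm (var y) (t.subst σ)) : ∃ x ∈ t.varsSet, IsSubterm (var y) (σ x) := by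
  induction t using Term.rec (motive_2 := fun l => ∀ t ∈ l,
      IsSubterm (var y) (t.subst σ) → ∃ x ∈ t.varsSet, IsSubterm (var y) (σ x)) with
  | var x => exact ⟨x, IsSubterm.refl _, by rwa [subst] at h⟩
  | cst c => rw [subst] at h; cases h
  | nonce n => rw [subst] at h; cases h
  | func f args ih =>
      rw [subst_func] at h
      rcases isSubterm_func_iff.1 h with h | ⟨a, ha, hs⟩
      · cases h
      · obtain ⟨b, hb, rfl⟩ := List.mem_map.1 ha
        obtain ⟨x, hx, hxy⟩ := ih b hb hs
        exact ⟨x, IsSubterm.func hb hx, hxy⟩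
  | nil => simp_all
  | cons a l iha ihl =>
      rename_i t ht h
      rcases List.mem_cons.1 ht with rfl | ht
      · exact iha h
      · exact ihl t ht h

lemma ground_subst {σ : Subst} {t : Term} (h : ∀ x ∈ t.varsSet, (σ x).Ground) :
    (t.subst σ).Ground := by
  refine Set.eq_empty_of_forall_notMem fun y hy => ?_
  obtain ⟨x, hx, hxy⟩ := exists_var_of_isSubterm_subst t hy
  exact (Set.eq_empty_iff_forall_notMem.1 (h x hx)) y hxy

end Term

lemma subT_finite {T : Set Term} (hT : T.Finite) : (subT T).Finite :=
  (hT.biUnion fun t _ => t.sub_finite).subset fun _ ⟨_, ht, hst⟩ => Set.mem_biUnion ht hst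

lemma csTerms_finite (S : CSystem) : (csTerms S).Finite :=
  (S.finite_toSet.image Constraint.term).subset fun _ ⟨c, hc, hct⟩ => ⟨c, hc, hct⟩

def rhsSet (D : List Step) : Set Term := {r | r ∈ D.map Step.rhs}

@[simp] lemma mem_rhsSet {D : List Step} {r : Term} : r ∈ rhsSet D ↔ r ∈ D.map Step.rhs :=
  Iff.rfl

@[simp] lemma rhsSet_append (D E : List Step) : rhsSet (D ++ E) = rhsSet D ∪ rhsSet E := by
  ext; simp

lemma RHSset_eq_rhsSet_take (D : List Step) (k : ℕ) : RHSset D k = rhsSet (D.take k) := by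
  ext r
  constructor
  · rintro ⟨j, hj, s, hs, rfl⟩
    exact List.mem_map_of_mem (List.mem_iff_getElem?.2 ⟨j, by rwa [List.getElem?_take_of_lt hj]⟩)
  · intro h
    obtain ⟨s, hs, rfl⟩ := List.mem_map.1 h
    obtain ⟨j, hj⟩ := List.mem_iff_getElem?.1 hs
    rw [List.getElem?_take] at hj
    split_ifs at hj with hjk
    exact ⟨j, hjk, s, hj, rfl⟩

lemma RHSset_length (D : List Step) : RHSset D D.length = rhsSet D := by
  rw [RHSset_eq_rhsSet_take, List.take_length]

lemma RHSset_append_of_le {D : List Step} (E : List Step) {k : ℕ} (hk : k ≤ D.length) :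
    RHSset (D ++ E) k = RHSset D k := by
  rw [RHSset_eq_rhsSet_take, RHSset_eq_rhsSet_take, List.take_append_of_le_length hk]

lemma RHSset_mono (D : List Step) {k k' : ℕ} (h : k ≤ k') : RHSset D k ⊆ RHSset D k' :=
  fun _ ⟨j, hj, s, hs, hr⟩ => ⟨j, hj.trans_le h, s, hs, hr⟩

lemma Der_mono (DS : DeductionSystem) {K K' : Set Term} (h : K ⊆ K') : Der DS K ⊆ Der DS K' :=
  fun _ ⟨D, hD, hrecv, hlast⟩ => ⟨D, hD, fun j u hj => h (hrecv j u hj), hlast⟩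

lemma isDerivation_append_singleton_iff {DS : DeductionSystem} {D : List Step} {s : Step} :
    IsDerivation DS (D ++ [s]) ↔ IsDerivation DS D ∧ IsDeduction DS s ∧
      ∀ l r, s = .std l r → ∀ u ∈ l, u ∈ rhsSet D := by
  have hrhs : ∀ i ≤ D.length, RHSset (D ++ [s]) i = RHSset D i :=
    fun i hi => RHSset_append_of_le [s] hi
  constructor
  · rintro ⟨hded, hlhs⟩
    refine ⟨⟨fun s' hs' => hded s' (by simp [hs']), fun i l r hi => ?_⟩, hded s (by simp), ?_⟩
    · have hi' : i < D.length := (List.getElem?_eq_some_iff.1 hi).1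
      rw [← hrhs i hi'.le]
      exact hlhs i l r (List.getElem?_append_singleton_eq_some.2 (Or.inl hi))
    · rintro l r rfl
      rw [← RHSset_length, ← hrhs _ le_rfl]
      exact hlhs D.length l r (List.getElem?_append_singleton_eq_some.2 (Or.inr ⟨rfl, rfl⟩))
  · rintro ⟨⟨hded, hlhs⟩, hs, hlast⟩
    refine ⟨fun s' hs' => ?_, fun i l r hi => ?_⟩
    · rcases List.mem_append.1 hs' with h | h
      · exact hded s' h
      · rwa [List.mem_singleton.1 h]
    · rcases List.getElem?_append_singleton_eq_some.1 hi with hi | ⟨rfl, rfl⟩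
      · rw [hrhs i (List.getElem?_eq_some_iff.1 hi).1.le]
        exact hlhs i l r hi
      · rw [hrhs _ le_rfl, RHSset_length]
        exact hlast l r rfl

lemma NoDuplicateStd.append_recv {D : List Step} (h : NoDuplicateStd D) (t : Term) :
    NoDuplicateStd (D ++ [Step.recv t]) := by
  intro i j li lj r hi hj
  rcases List.getElem?_append_singleton_eq_some.1 hi with hi | ⟨_, ⟨⟩⟩
  rcases List.getElem?_append_singleton_eq_some.1 hj with hj | ⟨_, ⟨⟩⟩
  exact h i j li lj r hi hj

lemma NoDuplicateStd.append_std {D : List Step} (h : NoDuplicateStd D) {l : List Term} {r : Term}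
    (hr : r ∉ rhsSet D) : NoDuplicateStd (D ++ [Step.std l r]) := by
  have hnot : ∀ i li, D[i]? ≠ some (Step.std li r) := fun i li hi =>
    hr (List.mem_map.2 ⟨_, List.mem_of_getElem? hi, rfl⟩)
  intro i j li lj r' hi hj
  rcases List.getElem?_append_singleton_eq_some.1 hi with hiD | ⟨rfl, hil⟩ <;>
    rcases List.getElem?_append_singleton_eq_some.1 hj with hjD | ⟨rfl, hjl⟩
  · exact h i j li lj r' hiD hjD
  · obtain ⟨-, rfl⟩ := Step.std.inj hjl; exact absurd hiD (hnot _ _)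
  · obtain ⟨-, rfl⟩ := Step.std.inj hil; exact absurd hjD (hnot _ _)
  · rfl

def SaturatedAt (DS : DeductionSystem) (F : Set Term) (D : List Step) (k : ℕ) : Prop :=
  F ∩ Der DS (RHSset D k) ⊆ RHSset D k

lemma SaturatedAt.append {DS : DeductionSystem} {F : Set Term} {D : List Step} {k : ℕ}
    (h : SaturatedAt DS F D k) (hk : k ≤ D.length) (E : List Step) :
    SaturatedAt DS F (D ++ E) k := by
  rwa [SaturatedAt, RHSset_append_of_le E hk]

structure IsSaturatedDerivation (DS : DeductionSystem) (F : Set Term) (D : List Step) :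
    Prop where
  isDerivation : IsDerivation DS D
  noDuplicateStd : NoDuplicateStd D
  saturatedAt_recv : ∀ j t, D[j]? = some (Step.recv t) → SaturatedAt DS F D j

namespace IsSaturatedDerivation

variable {DS : DeductionSystem} {F : Set Term} {D : List Step}

lemma nil : IsSaturatedDerivation DS F [] :=
  ⟨⟨by simp, by simp⟩, by simp [NoDuplicateStd], by simp⟩

lemma append_std (h : IsSaturatedDerivation DS F D) {l : List Term} {r : Term}
    (hded : IsDeduction DS (Step.std l r)) (hl : ∀ u ∈ l, u ∈ rhsSet D) (hr : r ∉ rhsSet D) :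
    IsSaturatedDerivation DS F (D ++ [Step.std l r]) where
  isDerivation := isDerivation_append_singleton_iff.2
    ⟨h.isDerivation, hded, fun _ _ he => by cases he; exact hl⟩
  noDuplicateStd := h.noDuplicateStd.append_std hr
  saturatedAt_recv j t hj := by
    rcases List.getElem?_append_singleton_eq_some.1 hj with hj | ⟨-, ⟨⟩⟩
    exact (h.saturatedAt_recv j t hj).append (List.getElem?_eq_some_iff.1 hj).1.le _

lemma append_recv (h : IsSaturatedDerivation DS F D) (hsat : SaturatedAt DS F D D.length)
    {t : Term} (ht : t.Ground) : IsSaturatedDerivation DS F (D ++ [Step.recv t]) where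
  isDerivation := isDerivation_append_singleton_iff.2
    ⟨h.isDerivation, ht, fun _ _ he => by cases he⟩
  noDuplicateStd := h.noDuplicateStd.append_recv t
  saturatedAt_recv j u hj := by
    rcases List.getElem?_append_singleton_eq_some.1 hj with hj | ⟨rfl, -⟩
    · exact (h.saturatedAt_recv j u hj).append (List.getElem?_eq_some_iff.1 hj).1.le _
    · exact hsat.append le_rfl _

lemma exists_append_superset_rhsSet (h : IsSaturatedDerivation DS F D) {E₀ : List Step}
    (hE₀ : IsDerivation DS E₀) (hrecv : ∀ u, Step.recv u ∈ E₀ → u ∈ rhsSet D) :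
    ∃ E, (∀ u, Step.recv u ∉ E) ∧ IsSaturatedDerivation DS F (D ++ E) ∧
      rhsSet E₀ ⊆ rhsSet (D ++ E) := by
  induction E₀ using List.reverseRecOn with
  | nil => exact ⟨[], by simp, by simpa using h, by simp [rhsSet]⟩
  | append_singleton E₀ s ih =>
    obtain ⟨hE₀', hs, hlhs⟩ := isDerivation_append_singleton_iff.1 hE₀
    obtain ⟨E, hE, hDE, hsub⟩ := ih hE₀' fun u hu => hrecv u (by simp [hu])
    rw [rhsSet_append]
    cases s with
    | recv u =>
      have hu : u ∈ rhsSet (D ++ E) := by simpa using Or.inl (hrecv u (by simp))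
      exact ⟨E, hE, hDE, Set.union_subset hsub (by simpa [rhsSet, Step.rhs] using hu)⟩
    | std l r =>
      by_cases hr : r ∈ rhsSet (D ++ E)
      · exact ⟨E, hE, hDE, Set.union_subset hsub (by simpa [rhsSet, Step.rhs] using hr)⟩
      · refine ⟨E ++ [Step.std l r], by simpa using hE, ?_, ?_⟩
        · rw [← List.append_assoc]
          exact hDE.append_std hs (fun u hu => hsub (hlhs l r rfl u hu)) hr
        · rw [← List.append_assoc, rhsSet_append]
          exact Set.union_subset_union hsub subset_rfl

lemma exists_append_mem_of_mem_Der (h : IsSaturatedDerivation DS F D) {u : Term}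
    (hu : u ∈ Der DS (rhsSet D)) :
    ∃ E, (∀ u, Step.recv u ∉ E) ∧ IsSaturatedDerivation DS F (D ++ E) ∧
      u ∈ rhsSet (D ++ E) := by
  obtain ⟨E₀, hE₀, hrecv, l, hlast⟩ := hu
  obtain ⟨E, hE, hDE, hsub⟩ := h.exists_append_superset_rhsSet hE₀ fun v hv => by
    obtain ⟨j, hj⟩ := List.mem_iff_getElem?.1 hv
    exact hrecv j v hj
  exact ⟨E, hE, hDE, hsub (List.mem_map.2 ⟨_, List.mem_of_getLast? hlast, rfl⟩)⟩

lemma exists_append_saturatedAt_length (hF : F.Finite) (h : IsSaturatedDerivation DS F D) :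
    ∃ E, (∀ u, Step.recv u ∉ E) ∧ IsSaturatedDerivation DS F (D ++ E) ∧
      SaturatedAt DS F (D ++ E) (D ++ E).length := by
  induction hn : (F \ rhsSet D).ncard using Nat.strong_induction_on generalizing D with
  | _ n ih =>
  by_cases hsat : SaturatedAt DS F D D.length
  · exact ⟨[], by simp, by simpa using h, by simpa using hsat⟩
  simp only [SaturatedAt, RHSset_length, Set.not_subset] at hsat
  obtain ⟨u, ⟨huF, huDer⟩, hu⟩ := hsat
  obtain ⟨E₁, hE₁, h₁, hu₁⟩ := h.exists_append_mem_of_mem_Der huDer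
  have hlt : (F \ rhsSet (D ++ E₁)).ncard < n := by
    refine hn ▸ Set.ncard_lt_ncard ?_ hF.sdiff
    rw [rhsSet_append, ← Set.sdiff_sdiff]
    exact Set.sdiff_ssubset_left_iff.2 ⟨u, ⟨huF, hu⟩, by simpa [hu] using hu₁⟩
  obtain ⟨E₂, hE₂, h₂, hsat₂⟩ := ih _ hlt h₁ rfl
  refine ⟨E₁ ++ E₂, ?_, by simpa using h₂, by simpa using hsat₂⟩
  simp only [List.mem_append, not_or]
  exact fun v => ⟨hE₁ v, hE₂ v⟩

end IsSaturatedDerivation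

namespace Compliant

variable {S : CSystem} {σ : Subst} {D : List Step} {α : ℕ → ℕ}

lemma nil : Compliant [] σ [] α :=
  ⟨by simp, by simp, by simp⟩

lemma append_of_forall_not_recv (h : Compliant S σ D α) {E : List Step}
    (hE : ∀ u, Step.recv u ∉ E) : Compliant S σ (D ++ E) α where
  mono := h.mono
  maps i t hi := by
    have hα := h.maps i t hi
    rwa [List.getElem?_append_left (List.getElem?_eq_some_iff.1 hα).1]
  surj j u hj := by
    rw [List.getElem?_append] at hj
    split_ifs at hj
    · exact h.surj j u hj
    · exact absurd (List.mem_of_getElem? hj) (hE u)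

lemma append_of_forall_ne_send (h : Compliant S σ D α) {c : Constraint}
    (hc : ∀ t, c ≠ .send t) : Compliant (S ++ [c]) σ D α where
  mono i j ti tj hi hj hij := by
    rcases List.getElem?_append_singleton_eq_some.1 hj with hj | ⟨-, rfl⟩
    · have hjS := (List.getElem?_eq_some_iff.1 hj).1
      exact h.mono i j ti tj (by rwa [List.getElem?_append_left (hij.trans hjS)] at hi) hj hij
    · exact absurd rfl (hc tj)
  maps i t hi := by
    rcases List.getElem?_append_singleton_eq_some.1 hi with hi | ⟨-, rfl⟩
    · exact h.maps i t hi
    · exact absurd rfl (hc t)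
  surj j u hj := by
    obtain ⟨i, t, hi, hij⟩ := h.surj j u hj
    exact ⟨i, t, List.getElem?_append_singleton_eq_some.2 (Or.inl hi), hij⟩

lemma append_send (h : Compliant S σ D α) (t : Term) :
    Compliant (S ++ [.send t]) σ (D ++ [.recv (t.subst σ)])
      (fun i => if i < S.length then α i else D.length) where
  mono i j ti tj hi hj hij := by
    have hiS : i < S.length := by
      have := (List.getElem?_eq_some_iff.1 hj).1
      simp only [List.length_append, List.length_singleton] at this
      omega
    rw [List.getElem?_append_left hiS] at hi
    rcases List.getElem?_append_singleton_eq_some.1 hj with hj | ⟨rfl, -⟩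
    · have hjS := (List.getElem?_eq_some_iff.1 hj).1
      simp only [if_pos hiS, if_pos hjS]
      exact h.mono i j ti tj hi hj hij
    · simp only [if_pos hiS, lt_irrefl, if_false]
      exact (List.getElem?_eq_some_iff.1 (h.maps i ti hi)).1
  maps i t' hi := by
    rcases List.getElem?_append_singleton_eq_some.1 hi with hi | ⟨rfl, he⟩
    · have hiS := (List.getElem?_eq_some_iff.1 hi).1
      simp only [if_pos hiS]
      exact List.getElem?_append_singleton_eq_some.2 (Or.inl (h.maps i t' hi))
    · cases he
      simp
  surj j u hj := by
    rcases List.getElem?_append_singleton_eq_some.1 hj with hj | ⟨rfl, -⟩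
    · obtain ⟨i, t', hi, rfl⟩ := h.surj j u hj
      have hiS := (List.getElem?_eq_some_iff.1 hi).1
      exact ⟨i, t', List.getElem?_append_singleton_eq_some.2 (Or.inl hi), if_pos hiS⟩
    · exact ⟨S.length, t, by simp, by simp⟩

end Compliant

lemma IsSaturatedDerivation.maximalDeriv {DS : DeductionSystem} {F : Set Term} {D : List Step}
    (h : IsSaturatedDerivation DS F D) (hsat : SaturatedAt DS F D D.length) {T : Set Term}
    {σ : Subst} (hT : Term.subst σ '' subT T ⊆ F) : MaximalDeriv DS T σ D := by
  intro t ht k hk hder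
  have hF : t.subst σ ∈ F := hT ⟨t, ht, rfl⟩
  rcases Nat.sInf_mem (s := {D.length} ∪ {j | k ≤ j ∧ ∃ u, D[j]? = some (Step.recv u)})
    ⟨_, Or.inl rfl⟩ with hnext | ⟨hkj, u, hu⟩
  · rw [nextRecv, Set.mem_singleton_iff.1 hnext]
    exact hsat ⟨hF, Der_mono DS (RHSset_mono D hk) hder⟩
  · exact h.saturatedAt_recv _ u hu ⟨hF, Der_mono DS (RHSset_mono D hkj) hder⟩

lemma exists_compliant_saturatedDerivation (DS : DeductionSystem) {F : Set Term}
    (hF : F.Finite) (σ : Subst) (S : CSystem)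
    (hS : ∀ t, Constraint.send t ∈ S → (t.subst σ).Ground) :
    ∃ D α, IsSaturatedDerivation DS F D ∧ SaturatedAt DS F D D.length ∧ Compliant S σ D α := by
  induction S using List.reverseRecOn with
  | nil =>
    obtain ⟨E, hE, hsat, hend⟩ := IsSaturatedDerivation.nil.exists_append_saturatedAt_length hF
    exact ⟨_, id, hsat, hend, Compliant.nil.append_of_forall_not_recv hE⟩
  | append_singleton S c ih =>
    obtain ⟨D, α, hD, hend, hα⟩ := ih fun t ht => hS t (by simp [ht])
    cases c with
    | send t =>
      obtain ⟨E, hE, hsat, hend'⟩ :=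
        (hD.append_recv hend (hS t (by simp))).exists_append_saturatedAt_length hF
      exact ⟨_, _, hsat, hend', (hα.append_send t).append_of_forall_not_recv hE⟩
    | recv t => exact ⟨D, α, hD, hend, hα.append_of_forall_ne_send (by simp)⟩
    | neg t => exact ⟨D, α, hD, hend, hα.append_of_forall_ne_send (by simp)⟩

theorem exists_compliant_maximal_general (DS : DeductionSystem) (S : CSystem)
    (σ : Subst) (hg : σ.IsGround) (hd : σ.dom = csVars S) :
    ∃ (D : List Step) (α : ℕ → ℕ), IsDerivation DS D ∧ Compliant S σ D α ∧
      MaximalDeriv DS (csSub S) σ D ∧ NoDuplicateStd D := by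
  have hground (t : Term) (ht : Constraint.send t ∈ S) : (t.subst σ).Ground :=
    Term.ground_subst fun x hx => hg x (hd ▸ ⟨t, ⟨_, ht, rfl⟩, hx⟩)
  have hfinite : (Term.subst σ '' subT (csSub S)).Finite :=
    (subT_finite (subT_finite (csTerms_finite S))).image _
  obtain ⟨D, α, hD, hsat, hα⟩ := exists_compliant_saturatedDerivation DS hfinite σ S hground
  exact ⟨D, α, hD.isDerivation, hα, hD.maximalDeriv hsat subset_rfl, hD.noDuplicateStd⟩

/-- For every ground substitution `σ` with `dom(σ) = vars(S)` there exists an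
`(S,σ)`-compliant, `(Sub(S),σ)`-maximal derivation in which no term is deduced
twice by a standard rule. -/
theorem exists_compliant_maximal (DS : DeductionSystem) (S : CSystem) (hS : IsCS S)
    (σ : Subst) (hg : σ.IsGround) (hi : σ.Idem) (hd : σ.dom = csVars S) :
    ∃ (D : List Step) (α : ℕ → ℕ), IsDerivation DS D ∧ Compliant S σ D α ∧
      MaximalDeriv DS (csSub S) σ D ∧ NoDuplicateStd D :=
  exists_compliant_maximal_general DS S σ hg hd
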